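/- arXiv:1406.1610 — 8 statements merged into one kernel-verified Lean document; each statement's English description precedes it below -/
import Mathlib

section
/- Let N ≥ 2 and let F_A : ℝ^N → ℝ be defined on vectors with pairwise distinct coordinates by F_A(v) = (1/2)∑_{i=1}^N v_i² − ∑_{1≤i<j≤N} log|v_j − v_i|. Then for every v ∈ ℝ^N with pairwise distinct coordinates and every u ∈ ℝ^N, the quadratic form of the Hessian of F_A at v satisfies ∑_{1≤i,j≤N} u_i (∂²F_A/∂v_i∂v_j)(v) u_j = ∑_{i=1}^N u_i² + ∑_{1≤i<j≤N} (u_i − u_j)²/(v_i − v_j)², which is strictly positive whenever u ≠ 0; in particular the Hessian of F_A is positive definite at every such v, so every critical point of F_A is a local minimum. -/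
/-!
The Hessian is `1 + L`, where `L` is the Laplacian of the complete graph on `Fin N` with the
symmetric edge weights `w i j = 1 / (v i - v j) ^ 2`. The quadratic form of a weighted Laplacian
is `∑_{i<j} w i j (u i - u j)²`, which is nonnegative, so `1 + L` is positive definite.
-/

open Finset Matrix

section Laplacian

variable {ι : Type*} [Fintype ι]

def weightedLaplacian [DecidableEq ι] (w : ι → ι → ℝ) : Matrix ι ι ℝ :=
  of fun i j => if i = j then ∑ l ∈ univ.erase i, w i l else -w i j

theorem sum_sum_mul_mul_eq_dotProduct_mulVec {R : Type*} [CommSemiring R]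
    (M : Matrix ι ι R) (x : ι → R) :
    ∑ i, ∑ j, x i * M i j * x j = x ⬝ᵥ M *ᵥ x := by
  simp only [dotProduct, mulVec, mul_sum, mul_assoc]

theorem sum_mul_weightedLaplacian_mul [DecidableEq ι] (w : ι → ι → ℝ) (u : ι → ℝ) (i : ι) :
    ∑ j, u i * weightedLaplacian w i j * u j
      = ∑ j ∈ univ.erase i, w i j * (u i ^ 2 - u i * u j) := by
  have hoff : ∀ j ∈ univ.erase i, u i * weightedLaplacian w i j * u j = -(u i * w i j * u j) :=
    fun j hj => by simp [weightedLaplacian, (ne_of_mem_erase hj).symm]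
  rw [← add_sum_erase _ _ (mem_univ i), sum_congr rfl hoff]
  simp only [weightedLaplacian, of_apply, if_pos, mul_sum, sum_mul, ← sum_add_distrib]
  exact sum_congr rfl fun j _ => by ring

theorem sum_sum_erase_eq_sum_sum_Ioi {M : Type*} [AddCommMonoid M] [LinearOrder ι]
    [LocallyFiniteOrderTop ι] [LocallyFiniteOrderBot ι] (f : ι → ι → M) :
    ∑ i, ∑ j ∈ univ.erase i, f i j = ∑ i, ∑ j ∈ Ioi i, (f i j + f j i) := by
  have hsplit (i : ι) : univ.erase i = (Ioi i).disjUnion (Iio i) (disjoint_Ioi_Iio i) := by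
    rw [Ioi_disjUnion_Iio, compl_singleton]
  simp only [hsplit, sum_disjUnion, sum_add_distrib]
  congr 1
  exact sum_comm' fun i j => by simp

theorem weightedLaplacian_isHermitian [DecidableEq ι] {w : ι → ι → ℝ}
    (hw : ∀ i j, w i j = w j i) : (weightedLaplacian w).IsHermitian := by
  ext i j
  by_cases h : i = j
  · simp [weightedLaplacian, h]
  · simp [weightedLaplacian, h, Ne.symm h, hw i j]

theorem dotProduct_weightedLaplacian_mulVec [LinearOrder ι]
    [LocallyFiniteOrderTop ι] [LocallyFiniteOrderBot ι]
    {w : ι → ι → ℝ} (hw : ∀ i j, w i j = w j i) (u : ι → ℝ) :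
    u ⬝ᵥ weightedLaplacian w *ᵥ u = ∑ i, ∑ j ∈ Ioi i, w i j * (u i - u j) ^ 2 := by
  simp only [← sum_sum_mul_mul_eq_dotProduct_mulVec, sum_mul_weightedLaplacian_mul,
    sum_sum_erase_eq_sum_sum_Ioi]
  exact sum_congr rfl fun i _ => sum_congr rfl fun j _ => by rw [hw j i]; ring

theorem weightedLaplacian_posSemidef [LinearOrder ι]
    [LocallyFiniteOrderTop ι] [LocallyFiniteOrderBot ι]
    {w : ι → ι → ℝ} (hw : ∀ i j, w i j = w j i) (hw₀ : ∀ i j, 0 ≤ w i j) :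
    (weightedLaplacian w).PosSemidef := by
  refine .of_dotProduct_mulVec_nonneg (weightedLaplacian_isHermitian hw) fun u => ?_
  rw [star_trivial, dotProduct_weightedLaplacian_mulVec hw]
  exact sum_nonneg fun i _ => sum_nonneg fun j _ => mul_nonneg (hw₀ i j) (sq_nonneg _)

end Laplacian

theorem hessian_FA_posDef_general (N : ℕ) (v u : Fin N → ℝ) :
    let H : Matrix (Fin N) (Fin N) ℝ := Matrix.of fun i j =>
      if i = j then 1 + ∑ l ∈ Finset.univ.erase i, 1 / (v i - v l) ^ 2
      else -(1 / (v i - v j) ^ 2)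
    (∑ i, ∑ j, u i * H i j * u j
        = ∑ i, (u i) ^ 2 + ∑ i, ∑ j ∈ Finset.Ioi i, (u i - u j) ^ 2 / (v i - v j) ^ 2)
    ∧ (u ≠ 0 → 0 < ∑ i, ∑ j, u i * H i j * u j)
    ∧ H.PosDef := by
  intro H
  set w : Fin N → Fin N → ℝ := fun i j => 1 / (v i - v j) ^ 2
  have hw : ∀ i j, w i j = w j i := fun i j => by simp only [w]; ring
  have hH : H = 1 + weightedLaplacian w := by
    ext i j
    by_cases h : i = j <;> simp [H, w, weightedLaplacian, one_apply, h]
  have hH_pos : H.PosDef :=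
    hH ▸ PosDef.one.add_posSemidef (weightedLaplacian_posSemidef hw fun i j => by positivity)
  refine ⟨?_, fun hu => ?_, hH_pos⟩
  · rw [sum_sum_mul_mul_eq_dotProduct_mulVec, hH, add_mulVec, one_mulVec, dotProduct_add,
      dotProduct_weightedLaplacian_mulVec hw]
    simp only [dotProduct, sq, w]
    congr 1
    exact sum_congr rfl fun i _ => sum_congr rfl fun j _ => by ring
  · simpa [sum_sum_mul_mul_eq_dotProduct_mulVec] using hH_pos.dotProduct_mulVec_pos hu

/-- positive definiteness of the Hessian of `F_A` at points with
pairwise distinct coordinates.  The Hessian entries are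
`1 + ∑_{l≠i} 1/(v_i − v_l)²` on the diagonal and `−1/(v_i − v_j)²` off the diagonal. -/
theorem hessian_FA_posDef (N : ℕ) (hN : 2 ≤ N) (v u : Fin N → ℝ)
    (hv : ∀ i j : Fin N, i ≠ j → v i ≠ v j) :
    let H : Matrix (Fin N) (Fin N) ℝ := Matrix.of fun i j =>
      if i = j then 1 + ∑ l ∈ Finset.univ.erase i, 1 / (v i - v l) ^ 2
      else -(1 / (v i - v j) ^ 2)
    (∑ i, ∑ j, u i * H i j * u j
        = ∑ i, (u i) ^ 2 + ∑ i, ∑ j ∈ Finset.Ioi i, (u i - u j) ^ 2 / (v i - v j) ^ 2)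
    ∧ (u ≠ 0 → 0 < ∑ i, ∑ j, u i * H i j * u j)
    ∧ H.PosDef :=
  hessian_FA_posDef_general N v u
end

section
/- Let N ≥ 2 and let z_1 < z_2 < … < z_N be real numbers satisfying the system z_i = ∑_{j≠i} 1/(z_i − z_j) for every i = 1, …, N. Then z_1, …, z_N are exactly the N zeros of the N-th physicists' Hermite polynomial H_N; equivalently, the monic polynomial ∏_{n=1}^N (x − z_n) equals 2^{−N} H_N(x). -/
/-!
Let `p = ∏ (X - z i)`. At a simple root, `p''(z i) = 2 p'(z i) ∑_{j ≠ i} 1 / (z i - z j)`, so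
the system says precisely that `p'' - 2 X p' + 2 N p` vanishes at the `N` distinct points `z i`.
The `X ^ N` terms of this polynomial cancel, so it has degree `< N` and is therefore zero: `p`
solves Hermite's equation. Comparing leading terms in that equation shows that a nonzero
polynomial solution has degree exactly `N`; as `2 ^ N p - H_N` is a solution of degree `< N`,
it vanishes.
-/

open Finset

/-- The physicists' Hermite polynomial `H_N(x) = (−1)^N e^{x²} (d/dx)^N e^{−x²}`. -/
noncomputable def physHermite (N : ℕ) (x : ℝ) : ℝ :=
  (-1 : ℝ) ^ N * Real.exp (x ^ 2) * iteratedDeriv N (fun y => Real.exp (-(y ^ 2))) x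

open Polynomial

section HermiteOperator

variable {R : Type*} [CommRing R]

noncomputable def physHermitePoly : ℕ → R[X]
  | 0 => 1
  | n + 1 => 2 * X * physHermitePoly n - derivative (physHermitePoly n)

@[simp]
lemma physHermitePoly_zero : (physHermitePoly 0 : R[X]) = 1 := rfl

lemma physHermitePoly_succ (n : ℕ) :
    (physHermitePoly (n + 1) : R[X]) =
      2 * X * physHermitePoly n - derivative (physHermitePoly n) := rfl

lemma derivative_physHermitePoly_succ (n : ℕ) :
    derivative (physHermitePoly (n + 1) : R[X]) = 2 * ((n : R[X]) + 1) * physHermitePoly n := by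
  induction n with
  | zero => simp [physHermitePoly_succ]
  | succ n ih =>
    rw [physHermitePoly_succ (n + 1), derivative_sub, derivative_mul, ih, physHermitePoly_succ n]
    simp only [derivative_mul, derivative_ofNat, derivative_X, derivative_natCast,
      derivative_add, derivative_one]
    push_cast
    ring

lemma natDegree_physHermitePoly_le (n : ℕ) : (physHermitePoly n : R[X]).natDegree ≤ n := by
  induction n with
  | zero => simp
  | succ n ih =>
    rw [physHermitePoly_succ]
    refine (natDegree_sub_le _ _).trans (max_le ?_ ?_)
    · refine natDegree_mul_le.trans ?_
      have : (2 * X : R[X]).natDegree ≤ 1 := natDegree_mul_le.trans (by simp [natDegree_X_le])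
      omega
    · exact (natDegree_derivative_le _).trans (by omega)

lemma coeff_physHermitePoly_self (n : ℕ) : (physHermitePoly n : R[X]).coeff n = 2 ^ n := by
  induction n with
  | zero => simp
  | succ n ih =>
    have hdeg := natDegree_physHermitePoly_le (R := R) n
    have hderiv : (derivative (physHermitePoly n : R[X])).coeff (n + 1) = 0 :=
      coeff_eq_zero_of_natDegree_lt <| (natDegree_derivative_le _).trans_lt (by omega)
    rw [physHermitePoly_succ, coeff_sub, hderiv, mul_assoc, ← C_ofNat, coeff_C_mul, coeff_X_mul,
      ih, pow_succ]
    ring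

noncomputable def hermiteOperator (n : ℕ) : R[X] →ₗ[R] R[X] :=
  derivative ∘ₗ derivative - LinearMap.mulLeft R (2 * X) ∘ₗ derivative +
    (2 * n : R) • LinearMap.id

lemma hermiteOperator_apply (n : ℕ) (p : R[X]) :
    hermiteOperator n p =
      derivative (derivative p) - 2 * X * derivative p + 2 * (n : R[X]) * p := by
  simp [hermiteOperator, smul_eq_C_mul, mul_assoc, C_ofNat]

lemma coeff_hermiteOperator (n : ℕ) (p : R[X]) (k : ℕ) :
    (hermiteOperator n p).coeff k =
      ((k : R) + 1) * (k + 2) * p.coeff (k + 2) + 2 * ((n : R) - k) * p.coeff k := by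
  have hX : (2 * X * derivative p).coeff k = 2 * k * p.coeff k := by
    rcases k with _ | k
    · simp
    · rw [mul_assoc, ← C_ofNat, coeff_C_mul, coeff_X_mul, coeff_derivative]
      push_cast
      ring
  rw [hermiteOperator_apply, coeff_add, coeff_sub, hX, ← C_eq_natCast, ← C_ofNat, ← C_mul,
    coeff_C_mul, coeff_derivative, coeff_derivative]
  push_cast
  ring

lemma hermiteOperator_physHermitePoly (n : ℕ) :
    hermiteOperator n (physHermitePoly n : R[X]) = 0 := by
  rcases n with _ | n
  · simp [hermiteOperator_apply]
  · rw [hermiteOperator_apply, derivative_physHermitePoly_succ, derivative_mul,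
      physHermitePoly_succ n]
    simp only [derivative_mul, derivative_ofNat, derivative_natCast, derivative_add,
      derivative_one]
    push_cast
    ring

/-- On `X ^ k` the operator acts as `2 (n - k) X ^ k` plus lower order terms. -/
lemma degree_hermiteOperator_lt {n : ℕ} {p : R[X]} (hp : p.natDegree ≤ n) :
    (hermiteOperator n p).degree < n := by
  refine (degree_lt_iff_coeff_zero _ _).2 fun k hk => ?_
  rw [coeff_hermiteOperator, coeff_eq_zero_of_natDegree_lt (by omega : p.natDegree < k + 2)]
  rcases (Nat.cast_le.1 hk).eq_or_lt with rfl | hlt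
  · simp
  · simp [coeff_eq_zero_of_natDegree_lt (hp.trans_lt hlt)]

lemma natDegree_eq_of_hermiteOperator_eq_zero [IsDomain R] [CharZero R] {n : ℕ} {p : R[X]}
    (hp : p ≠ 0) (h : hermiteOperator n p = 0) : p.natDegree = n := by
  have hcoeff := congrArg (coeff · p.natDegree) h
  simp only [coeff_hermiteOperator, coeff_zero,
    coeff_eq_zero_of_natDegree_lt (by omega : p.natDegree < p.natDegree + 2), mul_zero,
    zero_add, mul_eq_zero, OfNat.ofNat_ne_zero, false_or, sub_eq_zero, coeff_natDegree,
    leadingCoeff_eq_zero, hp, or_false, Nat.cast_inj] at hcoeff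
  exact hcoeff.symm

lemma eq_zero_of_hermiteOperator_eq_zero [IsDomain R] [CharZero R] {n : ℕ} {p : R[X]}
    (h : hermiteOperator n p = 0) (hn : p.coeff n = 0) : p = 0 := by
  by_contra hp
  rw [← natDegree_eq_of_hermiteOperator_eq_zero hp h, coeff_natDegree] at hn
  exact hp (leadingCoeff_eq_zero.1 hn)

end HermiteOperator

section Roots

variable {K : Type*} [Field K] {ι : Type*} [DecidableEq ι]

lemma eval_derivative_prod_X_sub_C {s : Finset ι} {z : ι → K} {x : K}
    (hx : ∀ j ∈ s, x ≠ z j) :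
    (derivative (∏ j ∈ s, (X - C (z j)))).eval x =
      (∏ j ∈ s, (x - z j)) * ∑ j ∈ s, (x - z j)⁻¹ := by
  rw [derivative_prod_finset, eval_finsetSum, mul_sum]
  refine sum_congr rfl fun j hj => ?_
  rw [derivative_X_sub_C, mul_one, eval_prod, ← mul_prod_erase s _ hj]
  simp only [eval_sub, eval_X, eval_C]
  field_simp [sub_ne_zero.2 (hx j hj)]

lemma eval_derivative_X_sub_C_mul (a : K) (g : K[X]) :
    (derivative ((X - C a) * g)).eval a = g.eval a := by
  simp

lemma eval_derivative_derivative_X_sub_C_mul (a : K) (g : K[X]) :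
    (derivative (derivative ((X - C a) * g))).eval a = 2 * (derivative g).eval a := by
  simp only [derivative_mul, derivative_sub, derivative_X, derivative_C, sub_zero, one_mul,
    derivative_add, eval_add, eval_mul, eval_sub, eval_X, eval_C, sub_self, zero_mul, add_zero]
  ring

/-- Stieltjes' identity: at a simple root `z i` of `p = ∏ (X - z j)`,
`p''(z i) = 2 p'(z i) ∑_{j ≠ i} 1 / (z i - z j)`. -/
lemma eval_hermiteOperator_prod_X_sub_C [Fintype ι] {z : ι → K} (hz : Function.Injective z)
    (n : ℕ) (i : ι) :
    (hermiteOperator n (∏ j, (X - C (z j)))).eval (z i) =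
      2 * (derivative (∏ j, (X - C (z j)))).eval (z i) *
        (∑ j ∈ univ.erase i, (z i - z j)⁻¹ - z i) := by
  have hne : ∀ j ∈ univ.erase i, z i ≠ z j := fun j hj => hz.ne (ne_of_mem_erase hj).symm
  rw [hermiteOperator_apply, ← mul_prod_erase univ _ (mem_univ i)]
  simp only [eval_add, eval_sub, eval_mul, eval_X, eval_ofNat, eval_C, sub_self, zero_mul,
    mul_zero, eval_derivative_X_sub_C_mul, eval_derivative_derivative_X_sub_C_mul,
    eval_derivative_prod_X_sub_C hne]
  rw [eval_prod]
  simp only [eval_sub, eval_X, eval_C]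
  ring

lemma hermiteOperator_prod_X_sub_C_eq_zero [Fintype ι] {z : ι → K} (hz : Function.Injective z)
    (hsys : ∀ i, z i = ∑ j ∈ univ.erase i, 1 / (z i - z j)) :
    hermiteOperator (Fintype.card ι) (∏ j, (X - C (z j))) = 0 := by
  refine eq_zero_of_degree_lt_of_eval_index_eq_zero univ hz.injOn ?_ fun i _ => ?_
  · exact degree_hermiteOperator_lt (natDegree_finsetProd_X_sub_C_eq_card _ _).le
  · simp only [eval_hermiteOperator_prod_X_sub_C hz, ← one_div]
    rw [← hsys i, sub_self, mul_zero]

lemma C_mul_prod_X_sub_C_eq_physHermitePoly [CharZero K] [Fintype ι] {z : ι → K}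
    (hz : Function.Injective z) (hsys : ∀ i, z i = ∑ j ∈ univ.erase i, 1 / (z i - z j)) :
    C (2 ^ Fintype.card ι) * ∏ j, (X - C (z j)) = physHermitePoly (Fintype.card ι) := by
  rw [← sub_eq_zero]
  refine eq_zero_of_hermiteOperator_eq_zero (n := Fintype.card ι) ?_ ?_
  · rw [← smul_eq_C_mul, map_sub, map_smul, hermiteOperator_prod_X_sub_C_eq_zero hz hsys,
      hermiteOperator_physHermitePoly, smul_zero, sub_zero]
  · have hmonic := (monic_prod_X_sub_C z univ).coeff_natDegree
    rw [natDegree_finsetProd_X_sub_C_eq_card, card_univ] at hmonic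
    rw [coeff_sub, coeff_C_mul, hmonic, coeff_physHermitePoly_self, mul_one, sub_self]

end Roots

lemma iteratedDeriv_exp_neg_sq (n : ℕ) (x : ℝ) :
    iteratedDeriv n (fun y => Real.exp (-(y ^ 2))) x =
      (-1) ^ n * (physHermitePoly n).eval x * Real.exp (-(x ^ 2)) := by
  induction n generalizing x with
  | zero => simp
  | succ n ih =>
    have hexp :
        HasDerivAt (fun y : ℝ => Real.exp (-(y ^ 2))) (-(2 * x) * Real.exp (-(x ^ 2))) x := by
      simpa [mul_comm] using ((hasDerivAt_pow 2 x).neg).exp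
    have hderiv := (((physHermitePoly n).hasDerivAt x).const_mul ((-1 : ℝ) ^ n)).fun_mul hexp
    rw [iteratedDeriv_succ, funext ih, hderiv.deriv, physHermitePoly_succ]
    simp only [eval_sub, eval_mul, eval_ofNat, eval_X]
    ring

lemma physHermite_eq_eval (n : ℕ) (x : ℝ) : physHermite n x = (physHermitePoly n).eval x := by
  rw [physHermite, iteratedDeriv_exp_neg_sq]
  calc _ = ((-1) ^ n * (-1) ^ n) * (Real.exp (x ^ 2) * Real.exp (-(x ^ 2))) *
        (physHermitePoly n).eval x := by ring
    _ = (physHermitePoly n).eval x := by rw [← mul_pow, ← Real.exp_add]; simp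

theorem system_solutions_are_hermite_zeros_general (N : ℕ) (z : Fin N → ℝ)
    (hmono : StrictMono z)
    (hsys : ∀ i, z i = ∑ j ∈ Finset.univ.erase i, 1 / (z i - z j)) :
    (∀ i, physHermite N (z i) = 0) ∧ (∀ x : ℝ, physHermite N x = 0 → ∃ i, x = z i) ∧
      ∀ x : ℝ, ∏ n, (x - z n) = physHermite N x / 2 ^ N := by
  have hH : ∀ x, physHermite N x = 2 ^ N * ∏ n, (x - z n) := fun x => by
    have hpoly := C_mul_prod_X_sub_C_eq_physHermitePoly hmono.injective hsys
    rw [Fintype.card_fin] at hpoly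
    rw [physHermite_eq_eval, ← hpoly, eval_mul, eval_C, eval_prod]
    simp only [eval_sub, eval_X, eval_C]
  refine ⟨fun i => ?_, fun x hx => ?_, fun x => ?_⟩
  · rw [hH, prod_eq_zero (mem_univ i) (sub_self _), mul_zero]
  · rw [hH] at hx
    obtain ⟨i, -, hi⟩ := prod_eq_zero_iff.1 ((mul_eq_zero.1 hx).resolve_left (by positivity))
    exact ⟨i, sub_eq_zero.1 hi⟩
  · rw [hH]
    field_simp

/-- increasingly ordered reals satisfying `z_i = ∑_{j≠i} 1/(z_i − z_j)` are
exactly the zeros of the `N`-th physicists' Hermite polynomial; equivalently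
`∏ (x − z_n) = 2^{−N} H_N(x)`. -/
theorem system_solutions_are_hermite_zeros (N : ℕ) (hN : 2 ≤ N) (z : Fin N → ℝ)
    (hmono : StrictMono z)
    (hsys : ∀ i, z i = ∑ j ∈ Finset.univ.erase i, 1 / (z i - z j)) :
    (∀ i, physHermite N (z i) = 0) ∧ (∀ x : ℝ, physHermite N x = 0 → ∃ i, x = z i) ∧
      ∀ x : ℝ, ∏ n, (x - z n) = physHermite N x / 2 ^ N :=
  system_solutions_are_hermite_zeros_general N z hmono hsys
end

section
/- Let N ≥ 2 and let h_{N,1} < … < h_{N,N} be the N zeros of the N-th physicists' Hermite polynomial H_N. Then the squared discriminant-type product of the zeros satisfies ∏_{1≤i<j≤N} (h_{N,j} − h_{N,i})² = 2^{−N(N−1)/2} ∏_{j=1}^{N} j^j. -/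
/-!
Write `He_n` for Mathlib's (probabilists') `Polynomial.hermite n`. Since `e^{-x²}` is the Gaussian
`e^{-u²/2}` at `u = √2 x`, we have `H_N(x) = √2^N He_N(√2 x)`, so the `a_i = √2 h_i` are `N`
distinct roots of the monic `He_N`, and `∏_{i<j} (a_j - a_i)² = ±Res(He_N, He_N')`. Now
`He_N' = N He_{N-1}` and `He_{n+1} = X He_n - n He_{n-1}`, so the row operations behind the
resultant give `Res(He_{n+1}, He_n) = (-n)^n Res(He_n, He_{n-1})`, hence
`Res(He_N, He_N') = N^N ∏_{k<N} (-k)^k = ±∏_{k ≤ N} k^k`, with matching signs. Undoing the scaling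
by `√2` divides by `2` once for each of the `N(N-1)/2` pairs.
-/

open Finset

open Polynomial

theorem Fin.sum_card_Ioi (n : ℕ) : ∑ i : Fin n, #(Ioi i) = n * (n - 1) / 2 := by
  simp only [Fin.card_Ioi]
  rw [Fin.sum_univ_eq_sum_range (fun i => n - 1 - i), sum_range_reflect (fun i => i) n,
    sum_range_id]

theorem Finset.prod_prod_Iio_eq_prod_prod_Ioi {ι M : Type*} [Fintype ι] [Preorder ι]
    [LocallyFiniteOrderBot ι] [LocallyFiniteOrderTop ι] [CommMonoid M] (f : ι → ι → M) :
    ∏ i, ∏ j ∈ Iio i, f i j = ∏ i, ∏ j ∈ Ioi i, f j i :=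
  prod_comm' fun _ _ => by simp

theorem Fin.prod_prod_erase_sub {R : Type*} [CommRing R] {n : ℕ} (v : Fin n → R) :
    ∏ i, ∏ j ∈ univ.erase i, (v i - v j)
      = (-1) ^ (n * (n - 1) / 2) * ∏ i, ∏ j ∈ Ioi i, (v j - v i) ^ 2 := by
  have herase (i : Fin n) : univ.erase i = Iio i ∪ Ioi i := by
    ext j; simp [lt_or_lt_iff_ne]
  calc ∏ i, ∏ j ∈ univ.erase i, (v i - v j)
      = (∏ i, ∏ j ∈ Iio i, (v i - v j)) * ∏ i, ∏ j ∈ Ioi i, -(v j - v i) := by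
        simp only [herase, neg_sub, ← prod_mul_distrib]
        exact prod_congr rfl fun i _ => prod_union (disjoint_Ioi_Iio i).symm
    _ = (-1) ^ (n * (n - 1) / 2) * ∏ i, ∏ j ∈ Ioi i, (v j - v i) ^ 2 := by
        simp only [prod_prod_Iio_eq_prod_prod_Ioi (fun i j => v i - v j), prod_neg,
          prod_mul_distrib, prod_pow_eq_pow_sum, Fin.sum_card_Ioi, sq]
        ring

theorem Fin.prod_prod_Ioi_sq_const_mul_sub {R : Type*} [CommRing R] {n : ℕ} (c : R)
    (v : Fin n → R) :
    ∏ i, ∏ j ∈ Ioi i, (c * v j - c * v i) ^ 2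
      = (c ^ 2) ^ (n * (n - 1) / 2) * ∏ i, ∏ j ∈ Ioi i, (v j - v i) ^ 2 := by
  simp only [← mul_sub, mul_pow, prod_mul_distrib, Finset.prod_const]
  rw [prod_pow_eq_pow_sum, Fin.sum_card_Ioi]

theorem Finset.sum_Icc_one_id (n : ℕ) : ∑ k ∈ Icc 1 n, k = (n + 1) * n / 2 := by
  have h := sum_range_id (n + 1)
  rwa [Nat.add_sub_cancel, range_eq_Ico, sum_eq_sum_Ico_succ_bot (by omega), zero_add,
    Ico_add_one_right_eq_Icc] at h

theorem Finset.prod_Icc_one_neg_pow_self {R : Type*} [CommRing R] (n : ℕ) :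
    ∏ k ∈ Icc 1 n, (-(k : R)) ^ k = (-1) ^ ((n + 1) * n / 2) * ∏ k ∈ Icc 1 n, (k : R) ^ k := by
  rw [prod_congr rfl fun (k : ℕ) _ => neg_pow (k : R) k, prod_mul_distrib, prod_pow_eq_pow_sum,
    sum_Icc_one_id]

namespace Polynomial

theorem derivative_hermite_succ (n : ℕ) :
    derivative (hermite (n + 1)) = C ((n : ℤ) + 1) * hermite n := by
  induction n with
  | zero => simp
  | succ n ih =>
    rw [hermite_succ (n + 1), derivative_sub, derivative_mul, derivative_X, ih, derivative_C_mul,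
      hermite_succ n]
    push_cast
    simp only [C_add, C_1]
    ring

theorem hermite_succ_succ (n : ℕ) :
    hermite (n + 2) = X * hermite (n + 1) - C ((n : ℤ) + 1) * hermite n := by
  rw [hermite_succ (n + 1), derivative_hermite_succ]

theorem resultant_hermite_succ (n : ℕ) :
    resultant (hermite (n + 1)) (hermite n) = ∏ k ∈ Icc 1 n, (-(k : ℤ)) ^ k := by
  induction n with
  | zero => simp
  | succ n ih =>
    set c : ℤ := -((n : ℤ) + 1)
    have hdeg : (C c * hermite n).natDegree ≤ n :=
      (natDegree_C_mul_le _ _).trans natDegree_hermite.le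
    simp only [natDegree_hermite] at ih ⊢
    calc resultant (hermite (n + 2)) (hermite (n + 1)) (n + 2) (n + 1)
        = resultant (C c * hermite n + hermite (n + 1) * X) (hermite (n + 1)) (n + 2) (n + 1) := by
          rw [hermite_succ_succ, C_neg]
          congr 1
          ring
      _ = resultant (C c * hermite n) (hermite (n + 1)) (n + 2) (n + 1) :=
          resultant_add_mul_left _ _ X _ _ (by rw [natDegree_X]; omega) natDegree_hermite.le
      _ = resultant (C c * hermite n) (hermite (n + 1)) n (n + 1) := by
          rw [resultant_succ_left_deg _ _ _ _ (hdeg.trans (by omega)),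
            resultant_succ_left_deg _ _ _ _ hdeg, coeff_hermite_self, mul_one,
            ← mul_assoc, ← pow_add, (Even.add_self _).neg_one_pow, one_mul]
      _ = c ^ (n + 1) * resultant (hermite (n + 1)) (hermite n) (n + 1) n := by
          rw [resultant_C_mul_left, resultant_comm, (Nat.even_mul_succ_self n).neg_one_pow,
            one_mul]
      _ = ∏ k ∈ Icc 1 (n + 1), (-(k : ℤ)) ^ k := by
          rw [ih, prod_Icc_succ_top (by omega), mul_comm]
          push_cast
          ring

theorem resultant_hermite_derivative (n : ℕ) :
    resultant (hermite n) (derivative (hermite n)) n (n - 1)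
      = (-1) ^ (n * (n - 1) / 2) * ∏ k ∈ Icc 1 n, (k : ℤ) ^ k := by
  cases n with
  | zero => simp
  | succ n =>
    have hres := resultant_hermite_succ n
    simp only [natDegree_hermite] at hres
    rw [derivative_hermite_succ, Nat.add_sub_cancel, resultant_C_mul_right, hres,
      prod_Icc_succ_top (by omega), prod_Icc_one_neg_pow_self]
    push_cast
    ring

variable {R : Type*} [CommRing R] [IsDomain R]

theorem roots_eq_map_of_injective {f : R[X]} (hf : f ≠ 0) {n : ℕ} (hdeg : f.natDegree = n)
    (r : Fin n → R) (hr : Function.Injective r) (hroot : ∀ i, f.IsRoot (r i)) :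
    f.roots = univ.val.map r := by
  have hle : univ.val.map r ≤ f.roots := (Multiset.le_iff_subset (univ.nodup.map hr)).mpr
    fun _ hx => by
      obtain ⟨i, -, rfl⟩ := Multiset.mem_map.mp hx
      exact (mem_roots hf).mpr (hroot i)
  exact (Multiset.eq_of_le_of_card_le hle (by simpa [hdeg] using card_roots' f)).symm

theorem resultant_derivative_eq_prod_sq_sub {f : R[X]} (hf : f.Monic) {n : ℕ}
    (hdeg : f.natDegree = n) (r : Fin n → R) (hr : Function.Injective r)
    (hroot : ∀ i, f.IsRoot (r i)) :
    resultant f (derivative f) n (n - 1)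
      = (-1) ^ (n * (n - 1) / 2) * ∏ i, ∏ j ∈ Ioi i, (r j - r i) ^ 2 := by
  classical
  have hroots := roots_eq_map_of_injective hf.ne_zero hdeg r hr hroot
  have hsplit : f.Splits := splits_iff_card_roots.mpr (by simp [hroots, hdeg])
  have heval (i : Fin n) : (derivative f).eval (r i) = ∏ j ∈ univ.erase i, (r i - r j) := by
    rw [hsplit.eval_root_derivative hf (by simp [hroots]), hroots, ← Multiset.map_erase _ hr]
    simp [Finset.prod_eq_multiset_prod, Multiset.map_map]
  subst hdeg
  rw [resultant_eq_prod_eval _ _ _ (natDegree_derivative_le f) hsplit, hf.leadingCoeff, one_pow,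
    one_mul, hroots, Multiset.map_map]
  exact (Finset.prod_congr rfl fun i _ => heval i).trans (Fin.prod_prod_erase_sub r)

end Polynomial

theorem physHermite_eq_aeval_hermite (N : ℕ) (x : ℝ) :
    physHermite N x = √2 ^ N * aeval (√2 * x) (hermite N) := by
  have hsq (y : ℝ) : (√2 * y) ^ 2 / 2 = y ^ 2 := by
    rw [mul_pow, Real.sq_sqrt zero_le_two]; ring
  have hgauss : (fun y : ℝ => Real.exp (-(y ^ 2))) = fun y => Real.exp (-((√2 * y) ^ 2 / 2)) := by
    simp only [hsq]
  rw [physHermite, hgauss, iteratedDeriv_comp_const_mul (f := fun u => Real.exp (-(u ^ 2 / 2)))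
    (by fun_prop), iteratedDeriv_eq_iterate]
  beta_reduce
  rw [deriv_gaussian_eq_hermite_mul_gaussian, hsq, Real.exp_neg]
  field_simp
  rw [← pow_mul, pow_mul', neg_one_sq, one_pow, one_mul]

theorem discriminant_hermite_zeros_general (N : ℕ) (h : Fin N → ℝ)
    (hmono : StrictMono h)
    (hzero : ∀ i, physHermite N (h i) = 0) :
    ∏ i, ∏ j ∈ Finset.Ioi i, (h j - h i) ^ 2
      = (∏ j ∈ Finset.Icc 1 N, (j : ℝ) ^ j) / 2 ^ (N * (N - 1) / 2) := by
  set a : Fin N → ℝ := fun i => √2 * h i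
  have ha : Function.Injective a :=
    (mul_right_injective₀ (by positivity)).comp hmono.injective
  have hroot (i : Fin N) : ((hermite N).map (Int.castRingHom ℝ)).IsRoot (a i) := by
    have := hzero i
    rw [physHermite_eq_aeval_hermite] at this
    simpa [IsRoot, a, aeval_def, eval₂_eq_eval_map] using this
  have hres := resultant_derivative_eq_prod_sq_sub ((hermite_monic N).map _)
    (by rw [(hermite_monic N).natDegree_map, natDegree_hermite]) a ha hroot
  rw [derivative_map, resultant_map_map, resultant_hermite_derivative,
    Fin.prod_prod_Ioi_sq_const_mul_sub, Real.sq_sqrt zero_le_two] at hres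
  simp only [map_mul, map_pow, map_neg, map_one, map_prod, map_natCast] at hres
  rw [eq_div_iff (by positivity), mul_comm]
  exact (mul_left_cancel₀ (pow_ne_zero _ (neg_ne_zero.mpr one_ne_zero)) hres).symm

/-- `∏_{i<j} (h_{N,j} − h_{N,i})² = 2^{−N(N−1)/2} ∏_{j=1}^N j^j`. -/
theorem discriminant_hermite_zeros (N : ℕ) (hN : 2 ≤ N) (h : Fin N → ℝ)
    (hmono : StrictMono h)
    (hzero : ∀ i, physHermite N (h i) = 0)
    (hall : ∀ x : ℝ, physHermite N x = 0 → ∃ i, x = h i) :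
    ∏ i, ∏ j ∈ Finset.Ioi i, (h j - h i) ^ 2
      = (∏ j ∈ Finset.Icc 1 N, (j : ℝ) ^ j) / 2 ^ (N * (N - 1) / 2) :=
  discriminant_hermite_zeros_general N h hmono hzero
end

section
/- Let N ≥ 2 and ν > −1/2. Define F_B(v, ν) = (1/2)∑_{i=1}^N v_i² − ((2ν+1)/2)∑_{i=1}^N log|v_i| − ∑_{1≤i<j≤N} log|v_j² − v_i²| for v ∈ ℝ^N with nonzero coordinates whose squares are pairwise distinct. Then for every such v and every u ∈ ℝ^N, the quadratic form of the Hessian of F_B at v satisfies ∑_{1≤i,j≤N} u_i (∂²F_B/∂v_i∂v_j)(v) u_j = ∑_{i=1}^N u_i²(1 + (2ν+1)/(2v_i²)) + ∑_{1≤i≠j≤N} [(u_i v_i − u_j v_j)² + (u_i v_j − u_j v_i)²]/(v_i² − v_j²)², which is strictly positive whenever u ≠ 0; in particular the Hessian of F_B(·, ν) is positive definite at every such v, so every critical point of F_B(·, ν) is a local minimum. -/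
/-!
Expanding the quadratic form, the diagonal sums `∑_{l ≠ i}` contribute `2 u_i² (v_i² + v_j²)` for
each ordered pair `i ≠ j`. Symmetrised in `(i, j)` and combined with the off-diagonal entries this
becomes `(u_i² + u_j²)(v_i² + v_j²) − 4 u_i u_j v_i v_j = (u_i v_i − u_j v_j)² + (u_i v_j − u_j v_i)²`
over `(v_i² − v_j²)²`. What remains, `∑ u_i² (1 + (2ν+1)/(2v_i²))`, is positive for `u ≠ 0` once
`2ν + 1 > 0`.
-/

open Finset

namespace Finset

variable {ι M : Type*} [Fintype ι] [DecidableEq ι] [AddCommMonoid M]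

theorem sum_sum_erase_comm (f : ι → ι → M) :
    ∑ i, ∑ j ∈ univ.erase i, f i j = ∑ i, ∑ j ∈ univ.erase i, f j i :=
  sum_comm' fun i j => by simp [ne_comm]

theorem sum_sum_erase_two_nsmul (f : ι → ι → M) :
    ∑ i, ∑ j ∈ univ.erase i, 2 • f i j = ∑ i, ∑ j ∈ univ.erase i, (f i j + f j i) := by
  simp only [two_nsmul, sum_add_distrib, ← sum_sum_erase_comm f]

end Finset

namespace Matrix

theorem star_dotProduct_mulVec_eq_sum_sum {ι R : Type*} [Fintype ι] [CommSemiring R] [StarRing R]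
    [TrivialStar R] (A : Matrix ι ι R) (x : ι → R) :
    star x ⬝ᵥ (A *ᵥ x) = ∑ i, ∑ j, x i * A i j * x j := by
  simp [dotProduct, mulVec, mul_sum, mul_assoc]

end Matrix

section HessianFB

variable {ι : Type*} [Fintype ι] [DecidableEq ι]

noncomputable def hessianFB (ν : ℝ) (v : ι → ℝ) : Matrix ι ι ℝ :=
  Matrix.of fun i j =>
    if i = j then
      1 + (2 * ν + 1) / (2 * (v i) ^ 2)
        + 2 * ∑ l ∈ univ.erase i, ((v i) ^ 2 + (v l) ^ 2) / ((v i) ^ 2 - (v l) ^ 2) ^ 2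
    else -(2 * (2 * v i * v j / ((v i) ^ 2 - (v j) ^ 2) ^ 2))

theorem hessianFB_isHermitian (ν : ℝ) (v : ι → ℝ) : (hessianFB ν v).IsHermitian := by
  ext i j
  by_cases hij : i = j
  · subst hij; simp
  · simp only [hessianFB, Matrix.conjTranspose_apply, Matrix.of_apply, star_trivial,
      if_neg hij, if_neg (Ne.symm hij)]
    ring

theorem sum_mul_hessianFB_mul (ν : ℝ) (v u : ι → ℝ) (i : ι) :
    ∑ j, u i * hessianFB ν v i j * u j
      = (u i) ^ 2 * (1 + (2 * ν + 1) / (2 * (v i) ^ 2))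
        + ∑ j ∈ univ.erase i,
          (2 • ((u i) ^ 2 * ((v i) ^ 2 + (v j) ^ 2) / ((v i) ^ 2 - (v j) ^ 2) ^ 2)
            - 4 * u i * u j * v i * v j / ((v i) ^ 2 - (v j) ^ 2) ^ 2) := by
  rw [← add_sum_erase _ _ (mem_univ i), sum_sub_distrib, ← smul_sum]
  have off_diag : ∀ j ∈ univ.erase i, u i * hessianFB ν v i j * u j
      = -(4 * u i * u j * v i * v j / ((v i) ^ 2 - (v j) ^ 2) ^ 2) := fun j hj => by
    rw [hessianFB, Matrix.of_apply, if_neg (ne_of_mem_erase hj).symm]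
    ring
  rw [sum_congr rfl off_diag, sum_neg_distrib, hessianFB, Matrix.of_apply, if_pos rfl]
  simp only [mul_div_assoc, ← mul_sum]
  ring

theorem quadForm_hessianFB (ν : ℝ) (v u : ι → ℝ) :
    ∑ i, ∑ j, u i * hessianFB ν v i j * u j
      = ∑ i, (u i) ^ 2 * (1 + (2 * ν + 1) / (2 * (v i) ^ 2))
        + ∑ i, ∑ j ∈ univ.erase i,
            ((u i * v i - u j * v j) ^ 2 + (u i * v j - u j * v i) ^ 2)
              / ((v i) ^ 2 - (v j) ^ 2) ^ 2 := by
  set g : ι → ι → ℝ := fun i j => (u i) ^ 2 * ((v i) ^ 2 + (v j) ^ 2) / ((v i) ^ 2 - (v j) ^ 2) ^ 2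
  set c : ι → ι → ℝ := fun i j => 4 * u i * u j * v i * v j / ((v i) ^ 2 - (v j) ^ 2) ^ 2
  have symmetrize : ∑ i, ∑ j ∈ univ.erase i, (2 • g i j - c i j)
      = ∑ i, ∑ j ∈ univ.erase i, (g i j + g j i - c i j) := by
    simp only [sum_sub_distrib, sum_sum_erase_two_nsmul]
  simp only [sum_mul_hessianFB_mul, sum_add_distrib (f := fun i => (u i) ^ 2 * _)]
  rw [symmetrize]
  congr 1
  refine sum_congr rfl fun i _ => sum_congr rfl fun j _ => ?_
  simp only [g, c]
  ring

theorem quadForm_hessianFB_pos {ν : ℝ} (hν : -(1 / 2) < ν) (v : ι → ℝ) {u : ι → ℝ}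
    (hu : u ≠ 0) : 0 < ∑ i, ∑ j, u i * hessianFB ν v i j * u j := by
  have weight_pos : ∀ i, 0 < 1 + (2 * ν + 1) / (2 * (v i) ^ 2) := fun i =>
    add_pos_of_pos_of_nonneg one_pos (div_nonneg (by linarith) (by positivity))
  obtain ⟨i, hi⟩ := Function.ne_iff.mp hu
  have diag_pos : 0 < ∑ i, (u i) ^ 2 * (1 + (2 * ν + 1) / (2 * (v i) ^ 2)) :=
    sum_pos' (fun k _ => mul_nonneg (sq_nonneg _) (weight_pos k).le)
      ⟨i, mem_univ i, mul_pos (sq_pos_of_ne_zero hi) (weight_pos i)⟩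
  rw [quadForm_hessianFB]
  exact add_pos_of_pos_of_nonneg diag_pos (sum_nonneg fun i _ => sum_nonneg fun j _ => by positivity)

theorem hessianFB_posDef {ν : ℝ} (hν : -(1 / 2) < ν) (v : ι → ℝ) : (hessianFB ν v).PosDef :=
  .of_dotProduct_mulVec_pos (hessianFB_isHermitian ν v) fun u hu => by
    rw [Matrix.star_dotProduct_mulVec_eq_sum_sum]
    exact quadForm_hessianFB_pos hν v hu

end HessianFB

theorem hessian_FB_posDef_general (N : ℕ) (ν : ℝ) (hν : -(1 / 2) < ν)
    (v u : Fin N → ℝ) :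
    let H : Matrix (Fin N) (Fin N) ℝ := Matrix.of fun i j =>
      if i = j then
        1 + (2 * ν + 1) / (2 * (v i) ^ 2)
          + 2 * ∑ l ∈ Finset.univ.erase i, ((v i) ^ 2 + (v l) ^ 2) / ((v i) ^ 2 - (v l) ^ 2) ^ 2
      else -(2 * (2 * v i * v j / ((v i) ^ 2 - (v j) ^ 2) ^ 2))
    (∑ i, ∑ j, u i * H i j * u j
        = ∑ i, (u i) ^ 2 * (1 + (2 * ν + 1) / (2 * (v i) ^ 2))
          + ∑ i, ∑ j ∈ Finset.univ.erase i,
              ((u i * v i - u j * v j) ^ 2 + (u i * v j - u j * v i) ^ 2)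
                / ((v i) ^ 2 - (v j) ^ 2) ^ 2)
    ∧ (u ≠ 0 → 0 < ∑ i, ∑ j, u i * H i j * u j)
    ∧ H.PosDef :=
  ⟨quadForm_hessianFB ν v u, quadForm_hessianFB_pos hν v, hessianFB_posDef hν v⟩

/-- positive definiteness of the Hessian of `F_B(·, ν)` at admissible points.
The Hessian entries are
`δ_ij(1 + (2ν+1)/(2v_i²)) + 2[δ_ij ∑_{l≠i} (v_i²+v_l²)/(v_i²−v_l²)² − (1−δ_ij)·2v_iv_j/(v_i²−v_j²)²]`. -/
theorem hessian_FB_posDef (N : ℕ) (hN : 2 ≤ N) (ν : ℝ) (hν : -(1 / 2) < ν)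
    (v u : Fin N → ℝ) (hv0 : ∀ i, v i ≠ 0)
    (hv : ∀ i j : Fin N, i ≠ j → (v i) ^ 2 ≠ (v j) ^ 2) :
    let H : Matrix (Fin N) (Fin N) ℝ := Matrix.of fun i j =>
      if i = j then
        1 + (2 * ν + 1) / (2 * (v i) ^ 2)
          + 2 * ∑ l ∈ Finset.univ.erase i, ((v i) ^ 2 + (v l) ^ 2) / ((v i) ^ 2 - (v l) ^ 2) ^ 2
      else -(2 * (2 * v i * v j / ((v i) ^ 2 - (v j) ^ 2) ^ 2))
    (∑ i, ∑ j, u i * H i j * u j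
        = ∑ i, (u i) ^ 2 * (1 + (2 * ν + 1) / (2 * (v i) ^ 2))
          + ∑ i, ∑ j ∈ Finset.univ.erase i,
              ((u i * v i - u j * v j) ^ 2 + (u i * v j - u j * v i) ^ 2)
                / ((v i) ^ 2 - (v j) ^ 2) ^ 2)
    ∧ (u ≠ 0 → 0 < ∑ i, ∑ j, u i * H i j * u j)
    ∧ H.PosDef :=
  hessian_FB_posDef_general N ν hν v u
end

section
/- Let N ≥ 1 and α > −1. Let s_1 < s_2 < … < s_N be pairwise distinct positive real numbers satisfying the system s_i = (α + 1) + ∑_{j≠i} 2 s_i/(s_i − s_j) for every i = 1, …, N. Then s_1, …, s_N are exactly the N zeros of the generalized Laguerre polynomial L_N^{(α)}; equivalently, the monic polynomial ∏_{j=1}^N (x − s_j) equals (−1)^N N! · L_N^{(α)}(x). -/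
/-!
Writing `P = ∏ (X - s_j)`, one has `P''(s_i) = 2 P'(s_i) ∑_{j ≠ i} 1 / (s_i - s_j)`, so the
system says exactly that the polynomial `X P'' + (α + 1 - X) P' + N P` vanishes at every `s_i`.
It has degree `< N`, hence is zero: `P` solves Laguerre's equation. That operator sends a nonzero
polynomial of degree `m < N` to one whose `X^m`-coefficient is `(N - m)` times its leading
coefficient, so Laguerre's equation has at most one monic solution of degree `N`, and
`(-1)^N N! L_N^{(α)}` is one.
-/

open Finset

/-- The generalized Laguerre polynomial
`L_N^{(α)}(x) = ∑_{k=0}^N (−1)^k binom(N+α, N−k) x^k / k!`, where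
`binom(N+α, N−k) = (∏_{i=k+1}^N (α+i)) / (N−k)!`. -/
noncomputable def laguerre (N : ℕ) (α : ℝ) (x : ℝ) : ℝ :=
  ∑ k ∈ Finset.range (N + 1),
    (-1 : ℝ) ^ k * (∏ i ∈ Finset.Icc (k + 1) N, (α + i))
      / ((Nat.factorial (N - k)) * (Nat.factorial k)) * x ^ k

open Polynomial Lagrange
open scoped Nat

noncomputable def laguerreOp {R : Type*} [CommRing R] (N : ℕ) (α : R) : R[X] →ₗ[R] R[X] where
  toFun p := X * derivative (derivative p) + (C (α + 1) - X) * derivative p + C (N : R) * p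
  map_add' p q := by simp only [map_add]; ring
  map_smul' c p := by
    rw [map_smul, map_smul]; simp only [smul_eq_C_mul, RingHom.id_apply]; ring

section CommRing

variable {R : Type*} [CommRing R] (N : ℕ) (α : R)

theorem laguerreOp_apply (p : R[X]) : laguerreOp N α p =
    X * derivative (derivative p) + (C (α + 1) - X) * derivative p + C (N : R) * p := rfl

theorem coeff_laguerreOp (p : R[X]) (k : ℕ) : (laguerreOp N α p).coeff k =
    (k + 1) * (k + α + 1) * p.coeff (k + 1) + (N - k) * p.coeff k := by
  cases k with
  | zero =>
    simp only [laguerreOp_apply, coeff_add, sub_mul, coeff_sub, mul_coeff_zero,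
      coeff_X_zero, coeff_derivative, coeff_C_zero]
    push_cast
    ring
  | succ k =>
    simp only [laguerreOp_apply, coeff_add, sub_mul, coeff_sub, coeff_C_mul, coeff_X_mul,
      coeff_derivative]
    push_cast
    ring

theorem degree_laguerreOp_lt {p : R[X]} (hp : p.natDegree ≤ N) :
    (laguerreOp N α p).degree < N := by
  refine (degree_lt_iff_coeff_zero _ _).2 fun k hk => ?_
  rw [coeff_laguerreOp, coeff_eq_zero_of_natDegree_lt (by omega : p.natDegree < k + 1)]
  rcases hk.eq_or_lt with rfl | hk
  · simp
  · simp [coeff_eq_zero_of_natDegree_lt (hp.trans_lt hk)]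

end CommRing

section CharZero

variable {R : Type*} [CommRing R] [NoZeroDivisors R] [CharZero R] {N : ℕ} {α : R}

theorem eq_zero_of_laguerreOp_eq_zero {p : R[X]} (hp : laguerreOp N α p = 0)
    (hdeg : p.degree < N) : p = 0 := by
  by_contra h0
  have hlt : p.natDegree < N := (natDegree_lt_iff_degree_lt h0).2 hdeg
  have htop := congrArg (coeff · p.natDegree) hp
  simp only [coeff_laguerreOp, coeff_zero,
    coeff_eq_zero_of_natDegree_lt (Nat.lt_succ_self _), mul_zero, zero_add] at htop
  have hN : (N : R) - p.natDegree ≠ 0 := sub_ne_zero.2 (by exact_mod_cast hlt.ne')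
  exact mul_ne_zero hN (leadingCoeff_ne_zero.2 h0) htop

theorem eq_of_laguerreOp_eq_zero {p q : R[X]} (hp : p.Monic) (hq : q.Monic)
    (hpN : p.natDegree = N) (hqN : q.natDegree = N)
    (hLp : laguerreOp N α p = 0) (hLq : laguerreOp N α q = 0) : p = q := by
  have hdeg : (p - q).degree < N := by
    have hpq : p.degree = q.degree := by
      rw [degree_eq_natDegree hp.ne_zero, degree_eq_natDegree hq.ne_zero, hpN, hqN]
    have h := degree_sub_lt_left hpq hp.ne_zero (by rw [hp.leadingCoeff, hq.leadingCoeff])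
    rwa [degree_eq_natDegree hp.ne_zero, hpN] at h
  exact sub_eq_zero.1 <| eq_zero_of_laguerreOp_eq_zero (by rw [map_sub, hLp, hLq, sub_zero]) hdeg

end CharZero

section Field

variable {K ι : Type*} [Field K] [DecidableEq ι] {s : Finset ι} {v : ι → K}

theorem eval_derivative_derivative_nodal_at_node (hvs : Set.InjOn v s) {i : ι} (hi : i ∈ s) :
    (derivative (derivative (nodal s v))).eval (v i) =
      2 * (derivative (nodal s v)).eval (v i) * ∑ j ∈ s.erase i, (v i - v j)⁻¹ := by
  -- With `P = (X - v i) Q`: `P'(v i) = Q(v i)`, `P''(v i) = 2 Q'(v i)`, and `Q'/Q = ∑ 1/(X - v j)`.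
  have hQ : ∀ j ∈ s.erase i, (nodal ((s.erase i).erase j) v).eval (v i) =
      (nodal (s.erase i) v).eval (v i) * (v i - v j)⁻¹ := by
    intro j hj
    have hji : v i - v j ≠ 0 := sub_ne_zero.2 fun h =>
      (ne_of_mem_erase hj) (hvs hi (mem_of_mem_erase hj) h).symm
    rw [nodal_eq_mul_nodal_erase hj, eval_mul, eval_sub, eval_X, eval_C,
      mul_comm, inv_mul_cancel_left₀ hji]
  rw [eval_nodal_derivative_eval_node_eq hi, nodal_eq_mul_nodal_erase hi, mul_assoc, mul_sum]
  simp only [derivative_mul, derivative_sub, derivative_X, derivative_C, sub_zero, one_mul,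
    map_add, eval_add, eval_mul, eval_sub, eval_X, eval_C, sub_self, zero_mul]
  rw [derivative_nodal, eval_finsetSum, sum_congr rfl hQ]
  ring

theorem laguerreOp_nodal_eq_zero {α : K} (hvs : Set.InjOn v s)
    (hsys : ∀ i ∈ s, v i = α + 1 + ∑ j ∈ s.erase i, 2 * v i / (v i - v j)) :
    laguerreOp #s α (nodal s v) = 0 := by
  refine eq_zero_of_degree_lt_of_eval_index_eq_zero s hvs
    (degree_laguerreOp_lt _ _ natDegree_nodal.le) fun i hi => ?_
  have hsum : ∑ j ∈ s.erase i, 2 * v i / (v i - v j) =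
      2 * v i * ∑ j ∈ s.erase i, (v i - v j)⁻¹ := by
    rw [mul_sum]; simp only [div_eq_mul_inv]
  rw [laguerreOp_apply]
  simp only [eval_add, eval_mul, eval_sub, eval_X, eval_C, eval_nodal_at_node hi,
    eval_derivative_derivative_nodal_at_node hvs hi, mul_zero, add_zero]
  have hvi := hsys i hi
  rw [hsum] at hvi
  linear_combination (-(derivative (nodal s v)).eval (v i)) * hvi

end Field

noncomputable def laguerreCoeff (N : ℕ) (α : ℝ) (k : ℕ) : ℝ :=
  (-1 : ℝ) ^ k * (∏ i ∈ Icc (k + 1) N, (α + i)) / ((N - k)! * k !)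

noncomputable def laguerrePoly (N : ℕ) (α : ℝ) : ℝ[X] :=
  ∑ k ∈ range (N + 1), C (laguerreCoeff N α k) * X ^ k

section Laguerre

variable (N : ℕ) (α : ℝ)

theorem eval_laguerrePoly (x : ℝ) : (laguerrePoly N α).eval x = laguerre N α x := by
  simp [laguerrePoly, eval_finsetSum, laguerre, laguerreCoeff]

theorem coeff_laguerrePoly (k : ℕ) :
    (laguerrePoly N α).coeff k = if k ≤ N then laguerreCoeff N α k else 0 := by
  simp [laguerrePoly, finsetSum_coeff]

theorem laguerreCoeff_recurrence {k : ℕ} (hk : k < N) :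
    (k + 1) * (k + α + 1) * laguerreCoeff N α (k + 1) + (N - k) * laguerreCoeff N α k = 0 := by
  obtain ⟨d, rfl⟩ : ∃ d, N = k + 1 + d := ⟨N - (k + 1), by omega⟩
  rw [laguerreCoeff, laguerreCoeff,
    ← insert_Icc_add_one_left_eq_Icc (by omega : k + 1 ≤ k + 1 + d), prod_insert (by simp),
    show k + 1 + d - k = d + 1 by omega, show k + 1 + d - (k + 1) = d by omega,
    Nat.factorial_succ, Nat.factorial_succ]
  push_cast
  field_simp
  ring

theorem laguerreOp_laguerrePoly : laguerreOp N α (laguerrePoly N α) = 0 := by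
  ext k
  rw [coeff_laguerreOp, coeff_laguerrePoly, coeff_laguerrePoly, coeff_zero]
  rcases lt_trichotomy k N with hk | rfl | hk
  · simp [hk.le, Nat.succ_le_of_lt hk, laguerreCoeff_recurrence N α hk]
  · simp
  · simp [hk.not_ge, (hk.trans (Nat.lt_succ_self k)).not_ge]

theorem coeff_laguerrePoly_self : (laguerrePoly N α).coeff N = (-1) ^ N / N ! := by
  simp [coeff_laguerrePoly, laguerreCoeff]

theorem natDegree_laguerrePoly : (laguerrePoly N α).natDegree = N :=
  natDegree_eq_of_le_of_coeff_ne_zero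
    (natDegree_le_iff_coeff_eq_zero.2 fun k hk => by simp [coeff_laguerrePoly, hk.not_ge])
    (by simp [coeff_laguerrePoly_self, Nat.factorial_ne_zero])

theorem monic_smul_laguerrePoly : (((-1 : ℝ) ^ N * N !) • laguerrePoly N α).Monic := by
  have hc : ((-1 : ℝ) ^ N * N !) ≠ 0 := by simp [Nat.factorial_ne_zero]
  rw [Monic, leadingCoeff, natDegree_smul _ hc, coeff_smul, natDegree_laguerrePoly,
    coeff_laguerrePoly_self, smul_eq_mul]
  field_simp
  rw [← pow_mul, pow_mul', neg_one_sq, one_pow]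

end Laguerre

theorem system_solutions_are_laguerre_zeros_general (N : ℕ) (α : ℝ)
    (s : Fin N → ℝ) (hmono : StrictMono s)
    (hsys : ∀ i, s i = (α + 1) + ∑ j ∈ Finset.univ.erase i, 2 * s i / (s i - s j)) :
    (∀ i, laguerre N α (s i) = 0) ∧ (∀ x : ℝ, laguerre N α x = 0 → ∃ i, x = s i) ∧
      ∀ x : ℝ, ∏ j, (x - s j) = (-1 : ℝ) ^ N * (Nat.factorial N) * laguerre N α x := by
  have hc : ((-1 : ℝ) ^ N * N !) ≠ 0 := by simp [Nat.factorial_ne_zero]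
  have hnodal : laguerreOp N α (nodal univ s) = 0 := by
    simpa using laguerreOp_nodal_eq_zero hmono.injective.injOn fun i _ => hsys i
  have hP : nodal univ s = ((-1 : ℝ) ^ N * N !) • laguerrePoly N α :=
    eq_of_laguerreOp_eq_zero nodal_monic (monic_smul_laguerrePoly N α)
      (by simp [natDegree_nodal]) (by rw [natDegree_smul _ hc, natDegree_laguerrePoly])
      hnodal (by rw [map_smul, laguerreOp_laguerrePoly, smul_zero])
  have hprod (x : ℝ) : ∏ j, (x - s j) = (-1 : ℝ) ^ N * N ! * laguerre N α x := by
    rw [← eval_nodal, hP, eval_smul, eval_laguerrePoly, smul_eq_mul]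
  refine ⟨fun i => ?_, fun x hx => ?_, hprod⟩
  · have hzero := (hprod (s i)).symm.trans (prod_eq_zero (mem_univ i) (sub_self _))
    exact (mul_eq_zero.1 hzero).resolve_left hc
  · obtain ⟨i, -, hi⟩ := prod_eq_zero_iff.1 ((hprod x).trans (by rw [hx, mul_zero]))
    exact ⟨i, sub_eq_zero.1 hi⟩

/-- positive, increasingly ordered reals satisfying
`s_i = (α+1) + ∑_{j≠i} 2s_i/(s_i − s_j)` are exactly the zeros of `L_N^{(α)}`;
equivalently `∏ (x − s_j) = (−1)^N N! L_N^{(α)}(x)`. -/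
theorem system_solutions_are_laguerre_zeros (N : ℕ) (hN : 1 ≤ N) (α : ℝ) (hα : -1 < α)
    (s : Fin N → ℝ) (hmono : StrictMono s) (hpos : ∀ i, 0 < s i)
    (hsys : ∀ i, s i = (α + 1) + ∑ j ∈ Finset.univ.erase i, 2 * s i / (s i - s j)) :
    (∀ i, laguerre N α (s i) = 0) ∧ (∀ x : ℝ, laguerre N α x = 0 → ∃ i, x = s i) ∧
      ∀ x : ℝ, ∏ j, (x - s j) = (-1 : ℝ) ^ N * (Nat.factorial N) * laguerre N α x :=
  system_solutions_are_laguerre_zeros_general N α s hmono hsys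
end

section
/- Let N ≥ 1 and x, y ∈ ℝ^N. Then ∑_{ρ ∈ S_N} exp(∑_{i=1}^N x_{ρ(i)} y_i) = ∑_{μ} [N! / (μ! · M(μ, N))] · m_μ(x) · m_μ(y), where the sum on the right runs over all integer partitions μ with at most N parts (viewed as weakly decreasing vectors μ = (μ_1 ≥ … ≥ μ_N ≥ 0) in ℤ^N), μ! = ∏_{j=1}^N μ_j!, m_μ is the monomial symmetric polynomial in N variables indexed by μ, and M(μ, N) = N!/(l_1^μ! ⋯ l_P^μ!) is the number of distinct permutations of μ as an N-dimensional vector, l_k^μ denoting the multiplicity of the k-th distinct value among the N entries of μ (zeros included). -/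
open Finset

/-- The monomial symmetric polynomial `m_μ(x)`: the sum of the distinct monomials obtained
by permuting the exponent vector `μ`. -/
noncomputable def monoSym {N : ℕ} (μ : Fin N → ℕ) (x : Fin N → ℝ) : ℝ :=
  ∑ e ∈ Finset.image (fun σ : Equiv.Perm (Fin N) => μ ∘ σ) Finset.univ, ∏ j, x j ^ e j

/-- `M(μ, N)`: the number of distinct rearrangements of the exponent vector `μ`. -/
def numDistinctPerms {N : ℕ} (μ : Fin N → ℕ) : ℕ :=
  (Finset.image (fun σ : Equiv.Perm (Fin N) => μ ∘ σ) Finset.univ).card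

/-!
Expanding every exponential as a product of exponential series turns the left-hand side into
`∑' e : ℕ^N, ∑_ρ ∏ᵢ (x_{ρ i} y_i)^{e_i} / e_i!`. Group the exponent vectors `e` by their
decreasing rearrangement `μ`. On the class of `μ` the factorials are `μ!`; the sum over `ρ` is
`(N! / M(μ, N)) m_μ(x)`, because every rearrangement of `μ` is hit by exactly `N! / M(μ, N)`
permutations; and the remaining sum over the class is `m_μ(y)`.
-/

open Nat Equiv

section ProdTsum

variable {R ι : Type*} [NormedCommRing R]

theorem summable_norm_prod_apply {n : ℕ} {f : Fin n → ι → R}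
    (hf : ∀ i, Summable fun k => ‖f i k‖) : Summable fun e : Fin n → ι => ‖∏ i, f i (e i)‖ := by
  induction n with
  | zero => exact .of_finite
  | succ n ih =>
    rw [← (Fin.consEquiv fun _ => ι).summable_iff]
    simpa [Function.comp_def, Fin.consEquiv, Fin.prod_univ_succ] using
      (hf 0).mul_norm (ih fun i => hf i.succ)

theorem prod_tsum_eq_tsum_prod_apply [CompleteSpace R] {n : ℕ} {f : Fin n → ι → R}
    (hf : ∀ i, Summable fun k => ‖f i k‖) :
    ∏ i, ∑' k, f i k = ∑' e : Fin n → ι, ∏ i, f i (e i) := by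
  induction n with
  | zero => simp
  | succ n ih =>
    rw [Fin.prod_univ_succ, ih fun i => hf i.succ,
      tsum_mul_tsum_of_summable_norm (hf 0) (summable_norm_prod_apply fun i => hf i.succ),
      ← (Fin.consEquiv fun _ => ι).tsum_eq]
    simp [Fin.consEquiv, Fin.prod_univ_succ]

end ProdTsum

theorem hasSum_prod_pow_div_factorial {n : ℕ} (a : Fin n → ℝ) :
    HasSum (fun e : Fin n → ℕ => ∏ i, a i ^ e i / (e i)!) (Real.exp (∑ i, a i)) := by
  have hf : ∀ i, Summable fun k => ‖a i ^ k / (k ! : ℝ)‖ := fun i => by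
    simpa [abs_pow] using Real.summable_pow_div_factorial |a i|
  have hexp : ∀ i, Real.exp (a i) = ∑' k, a i ^ k / (k ! : ℝ) := fun i => by
    rw [Real.exp_eq_exp_ℝ, NormedSpace.exp_eq_tsum_div]
  rw [Real.exp_sum, prod_congr rfl fun i _ => hexp i, prod_tsum_eq_tsum_prod_apply hf]
  exact (summable_norm_prod_apply hf).of_norm.hasSum

section Rearrangements

variable {N : ℕ} {α : Type*} [DecidableEq α]

def rearrangements (μ : Fin N → α) : Finset (Fin N → α) :=
  univ.image fun σ : Perm (Fin N) => μ ∘ σ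

theorem card_filter_comp_eq_comp_perm (μ : Fin N → α) (σ : Perm (Fin N)) :
    #{ρ : Perm (Fin N) | μ ∘ ρ = μ ∘ σ} = #{ρ : Perm (Fin N) | μ ∘ ρ = μ} :=
  card_equiv (Equiv.mulRight σ⁻¹) fun ρ => by
    simp [Perm.coe_mul, Perm.inv_def, ← Function.comp_assoc, Equiv.comp_symm_eq]

theorem card_rearrangements_nsmul_sum_perm {M : Type*} [AddCommMonoid M] (μ : Fin N → α)
    (g : (Fin N → α) → M) :
    #(rearrangements μ) • ∑ σ : Perm (Fin N), g (μ ∘ σ) = N ! • ∑ e ∈ rearrangements μ, g e := by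
  have hfiber : ∀ e ∈ rearrangements μ,
      #{ρ : Perm (Fin N) | μ ∘ ρ = e} = #{ρ : Perm (Fin N) | μ ∘ ρ = μ} := by
    simp only [rearrangements, mem_image, mem_univ, true_and, forall_exists_index]
    rintro _ σ rfl
    exact card_filter_comp_eq_comp_perm μ σ
  have hcard : N ! = #(rearrangements μ) * #{ρ : Perm (Fin N) | μ ∘ ρ = μ} := by
    have := card_eq_sum_card_image (fun σ : Perm (Fin N) => μ ∘ σ) univ
    rwa [Finset.card_univ, Fintype.card_perm, Fintype.card_fin, ← rearrangements,
      sum_congr rfl hfiber, sum_const, smul_eq_mul] at this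
  rw [sum_comp g fun σ : Perm (Fin N) => μ ∘ σ, ← rearrangements,
    sum_congr rfl fun e he => by rw [hfiber e he], ← smul_sum, smul_smul, hcard]

theorem self_mem_rearrangements (μ : Fin N → α) : μ ∈ rearrangements μ :=
  mem_image.2 ⟨1, mem_univ _, rfl⟩

end Rearrangements

section PermSum

variable {N : ℕ} {R : Type*} [CommSemiring R]

theorem sum_perm_prod_pow_eq_sum_perm_prod_pow_comp (μ : Fin N → ℕ) (x : Fin N → R) :
    ∑ ρ : Perm (Fin N), ∏ i, x (ρ i) ^ μ i = ∑ ρ : Perm (Fin N), ∏ j, x j ^ (μ ∘ ρ) j := by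
  refine Fintype.sum_equiv (Equiv.inv _) _ _ fun ρ => ?_
  simpa using Equiv.prod_comp ρ fun j => x j ^ μ (ρ⁻¹ j)

theorem sum_perm_prod_pow_comp_perm (μ : Fin N → ℕ) (σ : Perm (Fin N)) (x : Fin N → R) :
    ∑ ρ : Perm (Fin N), ∏ i, x (ρ i) ^ (μ ∘ σ) i = ∑ ρ : Perm (Fin N), ∏ i, x (ρ i) ^ μ i := by
  simp only [sum_perm_prod_pow_eq_sum_perm_prod_pow_comp]
  exact Fintype.sum_equiv (Equiv.mulLeft σ) _ _ fun ρ => rfl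

end PermSum

theorem monoSym_eq_sum_rearrangements {N : ℕ} (μ : Fin N → ℕ) (x : Fin N → ℝ) :
    monoSym μ x = ∑ e ∈ rearrangements μ, ∏ j, x j ^ e j :=
  rfl

theorem card_rearrangements_mul_sum_perm_prod_pow {N : ℕ} (μ : Fin N → ℕ) (x : Fin N → ℝ) :
    #(rearrangements μ) * ∑ ρ : Perm (Fin N), ∏ i, x (ρ i) ^ μ i = N ! * monoSym μ x := by
  rw [sum_perm_prod_pow_eq_sum_perm_prod_pow_comp, monoSym_eq_sum_rearrangements]
  simpa only [nsmul_eq_mul] using card_rearrangements_nsmul_sum_perm μ fun e => ∏ j, x j ^ e j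

theorem sum_rearrangements_sum_perm_prod_pow_div_factorial {N : ℕ} (μ : Fin N → ℕ)
    (x y : Fin N → ℝ) :
    ∑ e ∈ rearrangements μ, ∑ ρ : Perm (Fin N), ∏ i, (x (ρ i) * y i) ^ e i / ((e i)! : ℝ)
      = N ! / ((∏ j, ((μ j)! : ℝ)) * #(rearrangements μ)) * monoSym μ x * monoSym μ y := by
  have hterm : ∀ e ∈ rearrangements μ,
      ∑ ρ : Perm (Fin N), ∏ i, (x (ρ i) * y i) ^ e i / ((e i)! : ℝ)
        = (∑ ρ : Perm (Fin N), ∏ i, x (ρ i) ^ μ i) * (∏ i, y i ^ e i) / ∏ j, ((μ j)! : ℝ) := by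
    simp only [rearrangements, mem_image, mem_univ, true_and, forall_exists_index]
    rintro _ σ rfl
    simp only [mul_pow, prod_div_distrib, prod_mul_distrib, ← sum_div, ← sum_mul,
      sum_perm_prod_pow_comp_perm]
    rw [Function.comp_def, Equiv.prod_comp σ fun j => ((μ j)! : ℝ)]
  have hxsum := card_rearrangements_mul_sum_perm_prod_pow μ x
  have hcard : (#(rearrangements μ) : ℝ) ≠ 0 := by
    exact_mod_cast (card_pos.2 ⟨μ, self_mem_rearrangements μ⟩).ne'
  have hfact : ∏ j, ((μ j)! : ℝ) ≠ 0 := prod_ne_zero_iff.2 fun j _ => by positivity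
  rw [sum_congr rfl hterm, ← sum_div, ← mul_sum, monoSym_eq_sum_rearrangements μ y]
  field_simp
  linear_combination (∑ e ∈ rearrangements μ, ∏ j, y j ^ e j) * hxsum

section SortDesc

variable {N : ℕ} {α : Type*} [LinearOrder α]

def sortDesc (e : Fin N → α) : Fin N → α :=
  e ∘ Tuple.sort (OrderDual.toDual ∘ e)

theorem antitone_sortDesc (e : Fin N → α) : Antitone (sortDesc e) :=
  monotone_toDual_comp_iff.1 (Tuple.monotone_sort _)

theorem sortDesc_comp_perm (e : Fin N → α) (σ : Perm (Fin N)) : sortDesc (e ∘ σ) = sortDesc e :=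
  congrArg (OrderDual.ofDual ∘ ·)
    (Tuple.comp_perm_comp_sort_eq_comp_sort (f := OrderDual.toDual ∘ e))

theorem sortDesc_eq_self {μ : Fin N → α} (hμ : Antitone μ) : sortDesc μ = μ := by
  have hsort : Tuple.sort (OrderDual.toDual ∘ μ) = 1 :=
    Tuple.sort_eq_refl_iff_monotone.2 (monotone_toDual_comp_iff.2 hμ)
  rw [sortDesc, hsort, Perm.coe_one, Function.comp_id]

theorem sortDesc_eq_iff_mem_rearrangements {μ e : Fin N → α} (hμ : Antitone μ) :
    sortDesc e = μ ↔ e ∈ rearrangements μ := by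
  constructor
  · rintro rfl
    refine mem_image.2 ⟨(Tuple.sort (OrderDual.toDual ∘ e))⁻¹, mem_univ _, ?_⟩
    ext j
    simp [sortDesc]
  · simp only [rearrangements, mem_image, mem_univ, true_and, forall_exists_index]
    rintro σ rfl
    rw [sortDesc_comp_perm, sortDesc_eq_self hμ]

end SortDesc

theorem perm_sum_exp_eq_monoSym_expansion_general (N : ℕ) (x y : Fin N → ℝ) :
    ∑ ρ : Equiv.Perm (Fin N), Real.exp (∑ i, x (ρ i) * y i)
      = ∑' μ : {μ : Fin N → ℕ // Antitone μ},
          (Nat.factorial N : ℝ)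
              / ((∏ j, (Nat.factorial (μ.1 j) : ℝ)) * (numDistinctPerms μ.1 : ℝ))
            * monoSym μ.1 x * monoSym μ.1 y := by
  have hseries := hasSum_sum (s := univ) fun (ρ : Perm (Fin N)) _ =>
    hasSum_prod_pow_div_factorial fun i => x (ρ i) * y i
  let sortedPartition (e : Fin N → ℕ) : {μ : Fin N → ℕ // Antitone μ} :=
    ⟨sortDesc e, antitone_sortDesc e⟩
  rw [← (hseries.tsum_fiberwise sortedPartition).tsum_eq]
  refine tsum_congr fun μ => ?_
  have hfiber : sortedPartition ⁻¹' {μ} = ↑(rearrangements μ.1) := by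
    ext e
    simp [sortedPartition, Subtype.ext_iff, sortDesc_eq_iff_mem_rearrangements μ.2]
  rw [hfiber]
  exact (tsum_subtype' _ _).trans (sum_rearrangements_sum_perm_prod_pow_div_factorial μ.1 x y)

/-- `∑_{ρ∈S_N} exp(∑ x_{ρ(i)} y_i) = ∑_μ N!/(μ!·M(μ,N)) · m_μ(x) m_μ(y)`, the sum running over
all partitions `μ` with at most `N` parts (weakly decreasing vectors in `ℕ^N`). -/
theorem perm_sum_exp_eq_monoSym_expansion (N : ℕ) (hN : 1 ≤ N) (x y : Fin N → ℝ) :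
    ∑ ρ : Equiv.Perm (Fin N), Real.exp (∑ i, x (ρ i) * y i)
      = ∑' μ : {μ : Fin N → ℕ // Antitone μ},
          (Nat.factorial N : ℝ)
              / ((∏ j, (Nat.factorial (μ.1 j) : ℝ)) * (numDistinctPerms μ.1 : ℝ))
            * monoSym μ.1 x * monoSym μ.1 y :=
  perm_sum_exp_eq_monoSym_expansion_general N x y
end

section
/- Let N ≥ 1 and x, y ∈ ℝ^N, and let W_B denote the hyperoctahedral group of signed permutations of ℝ^N (compositions of coordinate permutations and sign changes of coordinates), acting on y. Then ∑_{ρ ∈ W_B} exp(x · ρy) = 2^N N! ∑_{μ} [m_μ((x)²) · m_μ((y)²)] / [(2μ)! · M(μ, N)], where the sum runs over all integer partitions μ with at most N parts (viewed as weakly decreasing vectors μ = (μ_1 ≥ … ≥ μ_N ≥ 0) in ℤ^N), (x)² = (x_1², …, x_N²), (2μ)! = ∏_{j=1}^N (2μ_j)!, m_μ is the monomial symmetric polynomial in N variables indexed by μ, and M(μ, N) is the number of distinct permutations of μ as an N-dimensional vector. -/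
open Finset

/-! Summing over the signs turns the summand of `σ` into `∏ᵢ 2 cosh (xᵢ y_{σ i})`. Expanding every
`cosh` in its even power series writes the left side as `2^N ∑_e ∑_σ ∏ᵢ (xᵢ y_{σ i})^{2eᵢ}/(2eᵢ)!`
over all exponent vectors `e` (nonnegativity lets the product of the series be multiplied out).
Grouping the `e` by their antitone rearrangement `μ`, the orbit of `μ` contributes
`m_μ(x²) · |Stab μ| · m_μ(y²) / (2μ)!`, and `|Stab μ| · M(μ, N) = N!` by orbit–stabilizer. -/

open scoped Nat

section PermOrbit

variable {α β : Type*} [Fintype α] [DecidableEq α] [DecidableEq β]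

def permOrbit (f : α → β) : Finset (α → β) :=
  univ.image fun σ : Equiv.Perm α => f ∘ σ

lemma mem_permOrbit {f g : α → β} :
    g ∈ permOrbit f ↔ ∃ σ : Equiv.Perm α, f ∘ σ = g := by
  simp [permOrbit]

lemma card_filter_comp_eq_comp (f : α → β) (τ : Equiv.Perm α) :
    #{σ : Equiv.Perm α | f ∘ σ = f ∘ τ} = #{σ : Equiv.Perm α | f ∘ σ = f} := by
  refine card_equiv (Equiv.mulRight τ⁻¹) fun σ => ?_
  simp only [mem_filter, mem_univ, true_and, Equiv.coe_mulRight, Equiv.Perm.coe_mul]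
  constructor
  · intro h; rw [← Function.comp_assoc, h]; ext; simp
  · intro h; ext i; simpa using congrFun h (τ i)

lemma sum_comp_perm_eq_card_smul_sum {M : Type*} [AddCommMonoid M] (f : α → β)
    (g : (α → β) → M) :
    ∑ σ : Equiv.Perm α, g (f ∘ σ)
      = #{σ : Equiv.Perm α | f ∘ σ = f} • ∑ h ∈ permOrbit f, g h := by
  rw [sum_comp, smul_sum]
  refine sum_congr rfl fun h hh => ?_
  obtain ⟨τ, rfl⟩ := mem_permOrbit.1 hh
  rw [card_filter_comp_eq_comp]

lemma card_filter_comp_eq_mul_card_permOrbit (f : α → β) :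
    #{σ : Equiv.Perm α | f ∘ σ = f} * #(permOrbit f) = (Fintype.card α)! := by
  have h := sum_comp_perm_eq_card_smul_sum f fun _ => (1 : ℕ)
  simp only [sum_const, smul_eq_mul, mul_one] at h
  rw [← h, card_univ, Fintype.card_perm]

end PermOrbit

section AntitoneSort

open OrderDual

variable {n : ℕ} {α : Type*} [LinearOrder α]

def antitoneSort (f : Fin n → α) : Fin n → α :=
  f ∘ Tuple.sort (toDual ∘ f)

lemma antitone_antitoneSort (f : Fin n → α) : Antitone (antitoneSort f) :=
  monotone_toDual_comp_iff.1 (Tuple.monotone_sort (toDual ∘ f))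

lemma antitoneSort_comp_perm (f : Fin n → α) (σ : Equiv.Perm (Fin n)) :
    antitoneSort (f ∘ σ) = antitoneSort f :=
  Tuple.comp_perm_comp_sort_eq_comp_sort (f := toDual ∘ f)

lemma antitoneSort_eq_self {μ : Fin n → α} (hμ : Antitone μ) : antitoneSort μ = μ := by
  rw [antitoneSort, (Tuple.sort_eq_refl_iff_monotone (f := toDual ∘ μ)).2
    (monotone_toDual_comp_iff.2 hμ)]
  rfl

lemma antitoneSort_eq_iff_mem_permOrbit {μ f : Fin n → α} (hμ : Antitone μ) :
    antitoneSort f = μ ↔ f ∈ permOrbit μ := by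
  rw [mem_permOrbit]
  constructor
  · rintro rfl
    exact ⟨(Tuple.sort (toDual ∘ f))⁻¹, by ext; simp [antitoneSort]⟩
  · rintro ⟨σ, rfl⟩
    rw [antitoneSort_comp_perm, antitoneSort_eq_self hμ]

lemma HasSum.sum_permOrbit {M : Type*} [AddCommGroup M] [UniformSpace M] [IsUniformAddGroup M]
    [CompleteSpace M] [T2Space M] {g : (Fin n → α) → M} {a : M} (hg : HasSum g a) :
    HasSum (fun μ : {μ : Fin n → α // Antitone μ} => ∑ f ∈ permOrbit μ.1, g f) a := by
  let s : (Fin n → α) → {μ : Fin n → α // Antitone μ} :=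
    fun f => ⟨antitoneSort f, antitone_antitoneSort f⟩
  convert hg.tsum_fiberwise s with μ
  have hfiber : s ⁻¹' {μ} = (permOrbit μ.1 : Set (Fin n → α)) := by
    ext f
    simp only [Set.mem_preimage, Set.mem_singleton_iff, Subtype.ext_iff, Finset.mem_coe]
    exact antitoneSort_eq_iff_mem_permOrbit μ.2
  rw [tsum_congr_set_coe g hfiber, Finset.tsum_subtype']

end AntitoneSort

lemma hasSum_fin_pi_prod_of_nonneg {κ : Type*} {n : ℕ} {f : Fin n → κ → ℝ} {a : Fin n → ℝ}
    (hf : ∀ i k, 0 ≤ f i k) (ha : ∀ i, HasSum (f i) (a i)) :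
    HasSum (fun e : Fin n → κ => ∏ i, f i (e i)) (∏ i, a i) := by
  induction n with
  | zero =>
    simp only [univ_eq_empty, prod_empty]
    exact hasSum_single (f := fun _ : Fin 0 → κ => (1 : ℝ)) finZeroElim
      fun e he => (he (Subsingleton.elim _ _)).elim
  | succ n ih =>
    obtain ⟨g, hg, htail⟩ :
        ∃ g : (Fin n → κ) → ℝ, (∀ e, g e = ∏ i, f i.succ (e i)) ∧ HasSum g (∏ i, a i.succ) :=
      ⟨_, fun _ => rfl, ih (fun i k => hf i.succ k) fun i => ha i.succ⟩
    have hg0 : 0 ≤ g := fun e => (hg e).symm ▸ prod_nonneg fun i _ => hf i.succ (e i)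
    have hmul := (ha 0).mul htail <| (ha 0).summable.mul_of_nonneg htail.summable (hf 0) hg0
    rw [Fin.prod_univ_succ, ← (Fin.consEquiv fun _ => κ).hasSum_iff]
    simpa [Function.comp_def, Fin.prod_univ_succ, hg] using hmul

lemma hasSum_fin_pi_prod_cosh {n : ℕ} (a : Fin n → ℝ) :
    HasSum (fun e : Fin n → ℕ => ∏ i, a i ^ (2 * e i) / ((2 * e i)! : ℝ))
      (∏ i, Real.cosh (a i)) :=
  hasSum_fin_pi_prod_of_nonneg (f := fun i k => a i ^ (2 * k) / ((2 * k)! : ℝ))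
    (fun i k => div_nonneg (Even.pow_nonneg (even_two_mul k) _) (by positivity))
    fun i => Real.hasSum_cosh (a i)

lemma sum_signs_exp_eq_prod_two_mul_cosh {ι : Type*} [Fintype ι] [DecidableEq ι] (a : ι → ℝ) :
    ∑ ε : ι → Bool, Real.exp (∑ i, (if ε i then 1 else -1) * a i)
      = ∏ i, 2 * Real.cosh (a i) := by
  simp_rw [Real.exp_sum]
  rw [← Fintype.prod_sum fun i (b : Bool) => Real.exp ((if b then 1 else -1) * a i)]
  refine prod_congr rfl fun i _ => ?_
  rw [Fintype.sum_bool, Real.cosh_eq]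
  simp only [if_true, Bool.false_eq_true, if_false, one_mul, neg_one_mul]
  ring

variable {N : ℕ}

lemma monoSym_eq_sum_permOrbit (μ : Fin N → ℕ) (x : Fin N → ℝ) :
    monoSym μ x = ∑ e ∈ permOrbit μ, ∏ j, x j ^ e j :=
  rfl

lemma numDistinctPerms_eq_card_permOrbit (μ : Fin N → ℕ) :
    numDistinctPerms μ = #(permOrbit μ) :=
  rfl

lemma sum_perm_prod_pow_of_mem_permOrbit {μ e : Fin N → ℕ} (he : e ∈ permOrbit μ)
    (Y : Fin N → ℝ) :
    ∑ σ : Equiv.Perm (Fin N), ∏ i, Y (σ i) ^ e i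
      = #{σ : Equiv.Perm (Fin N) | μ ∘ σ = μ} * monoSym μ Y := by
  obtain ⟨τ, rfl⟩ := mem_permOrbit.1 he
  calc ∑ σ : Equiv.Perm (Fin N), ∏ i, Y (σ i) ^ μ (τ i)
      = ∑ σ : Equiv.Perm (Fin N), ∏ k, Y k ^ (μ ∘ (τ * σ⁻¹)) k :=
        sum_congr rfl fun σ _ => by
          rw [← Equiv.prod_comp σ fun k => Y k ^ (μ ∘ (τ * σ⁻¹)) k]; simp
    _ = ∑ σ : Equiv.Perm (Fin N), ∏ k, Y k ^ (μ ∘ σ) k :=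
        Fintype.sum_equiv ((Equiv.inv _).trans (Equiv.mulLeft τ)) _ _ fun σ => by simp
    _ = _ := by
        rw [sum_comp_perm_eq_card_smul_sum μ fun e => ∏ k, Y k ^ e k, nsmul_eq_mul,
          monoSym_eq_sum_permOrbit]

lemma sum_permOrbit_sum_perm_prod_cosh_coeff (x y : Fin N → ℝ) (μ : Fin N → ℕ) :
    ∑ e ∈ permOrbit μ, ∑ σ : Equiv.Perm (Fin N),
        ∏ i, (x i * y (σ i)) ^ (2 * e i) / ((2 * e i)! : ℝ)
      = N ! * (monoSym μ (fun i => x i ^ 2) * monoSym μ (fun i => y i ^ 2))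
          / ((∏ j, ((2 * μ j)! : ℝ)) * numDistinctPerms μ) := by
  set c : ℝ := ↑(#{σ : Equiv.Perm (Fin N) | μ ∘ σ = μ}) with hc
  have hterm : ∀ e ∈ permOrbit μ, ∑ σ : Equiv.Perm (Fin N),
      ∏ i, (x i * y (σ i)) ^ (2 * e i) / ((2 * e i)! : ℝ)
        = c * monoSym μ (fun i => y i ^ 2) / (∏ j, ((2 * μ j)! : ℝ))
            * ∏ i, (x i ^ 2) ^ e i := by
    intro e he
    obtain ⟨τ, hτ⟩ := mem_permOrbit.1 he
    have hfac : ∏ i, ((2 * e i)! : ℝ) = ∏ j, ((2 * μ j)! : ℝ) := by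
      rw [← hτ]; exact Equiv.prod_comp τ fun j => ((2 * μ j)! : ℝ)
    simp_rw [prod_div_distrib, hfac, ← sum_div, mul_pow, pow_mul, prod_mul_distrib, ← mul_sum,
      sum_perm_prod_pow_of_mem_permOrbit he (fun j => y j ^ 2)]
    ring
  have hcard : c * numDistinctPerms μ = N ! := by
    have h := card_filter_comp_eq_mul_card_permOrbit μ
    rw [Fintype.card_fin] at h
    rw [hc, numDistinctPerms_eq_card_permOrbit]
    exact_mod_cast h
  have hM : (numDistinctPerms μ : ℝ) ≠ 0 :=
    Nat.cast_ne_zero.2 (card_ne_zero_of_mem (mem_permOrbit.2 ⟨1, rfl⟩))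
  rw [sum_congr rfl hterm, ← mul_sum, ← hcard, ← monoSym_eq_sum_permOrbit]
  field_simp

theorem signed_perm_sum_exp_eq_monoSym_expansion_general (N : ℕ) (x y : Fin N → ℝ) :
    ∑ σ : Equiv.Perm (Fin N), ∑ ε : Fin N → Bool,
        Real.exp (∑ i, x i * ((if ε i then (1 : ℝ) else -1) * y (σ i)))
      = 2 ^ N * (Nat.factorial N : ℝ) *
          ∑' μ : {μ : Fin N → ℕ // Antitone μ},
            monoSym μ.1 (fun i => (x i) ^ 2) * monoSym μ.1 (fun i => (y i) ^ 2)
              / ((∏ j, (Nat.factorial (2 * μ.1 j) : ℝ)) * (numDistinctPerms μ.1 : ℝ)) := by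
  have hsum := (hasSum_sum (s := univ) fun (σ : Equiv.Perm (Fin N)) _ =>
    hasSum_fin_pi_prod_cosh fun i => x i * y (σ i)).sum_permOrbit
  calc _ = ∑ σ : Equiv.Perm (Fin N), 2 ^ N * ∏ i, Real.cosh (x i * y (σ i)) := by
        simp_rw [mul_left_comm (x _), sum_signs_exp_eq_prod_two_mul_cosh, prod_mul_distrib,
          prod_const, card_univ, Fintype.card_fin]
    _ = _ := by
        rw [← mul_sum, ← hsum.tsum_eq, mul_assoc, ← tsum_mul_left (a := (N ! : ℝ))]
        simp_rw [sum_permOrbit_sum_perm_prod_cosh_coeff, mul_div_assoc]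

/-- summing `exp(x·ρy)` over the hyperoctahedral group `W_B` of signed
permutations `ρ : y ↦ (ε_1 y_{σ(1)}, …, ε_N y_{σ(N)})` gives
`2^N N! ∑_μ m_μ(x²) m_μ(y²) / ((2μ)!·M(μ,N))`. -/
theorem signed_perm_sum_exp_eq_monoSym_expansion (N : ℕ) (hN : 1 ≤ N) (x y : Fin N → ℝ) :
    ∑ σ : Equiv.Perm (Fin N), ∑ ε : Fin N → Bool,
        Real.exp (∑ i, x i * ((if ε i then (1 : ℝ) else -1) * y (σ i)))
      = 2 ^ N * (Nat.factorial N : ℝ) *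
          ∑' μ : {μ : Fin N → ℕ // Antitone μ},
            monoSym μ.1 (fun i => (x i) ^ 2) * monoSym μ.1 (fun i => (y i) ^ 2)
              / ((∏ j, (Nat.factorial (2 * μ.1 j) : ℝ)) * (numDistinctPerms μ.1 : ℝ)) :=
  signed_perm_sum_exp_eq_monoSym_expansion_general N x y
end

section
/- Let N ≥ 1 and let τ = (τ_1 ≥ τ_2 ≥ … ≥ τ_m > 0) be an integer partition with m ≤ N parts and |τ| = ∑_i τ_i = n ≥ 1, with conjugate partition entries τ'_j = #{i : τ_i ≥ j}. Consider the product P(β) = ∏_{(i,j)∈τ} (τ_i − j + β(τ'_j − i + 1)/2) / [ (β(N − i + 1)/2 + j − 1) · (τ_i − j + 1 + β(τ'_j − i)/2) ], where (i,j) ∈ τ means 1 ≤ i ≤ m and 1 ≤ j ≤ τ_i. Then as β → ∞: if τ has exactly one part (m = 1, so τ = (n)), P(β) converges to 1/(N^n · n!); if τ has more than one part (m ≥ 2), P(β) converges to 0. -/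
/-!
Each factor of `P(β)` is affine in `β` over a product of two affine functions of `β`. The second
one, `τ_i − j + 1 + β(τ'_j − i)/2`, is constant exactly when `τ'_j = i`, i.e. when the cell
`(i, j)` is the bottom cell of its column; then the factor tends to `1/((N − i + 1)(τ_i − j + 1))`,
and otherwise it tends to `0`. For `τ = (n)` every cell is a bottom cell and the limits multiply
to `1/(N^n n!)`; for `m ≥ 2` the corner `(1, 1)` is not, so the limit vanishes.
-/

open Finset Filter
open scoped Nat

lemma prod_Icc_sub_add_one_eq_factorial (n : ℕ) :
    ∏ j ∈ Icc 1 n, ((n : ℝ) - j + 1) = n ! := by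
  rw [← prod_range_add_one_eq_factorial, Nat.cast_prod]
  refine prod_nbij' (n - ·) (n - ·) (by simp; omega) (by simp; omega) (by simp; omega)
    (by simp; omega) fun j hj => ?_
  rw [mem_Icc] at hj
  push_cast [hj.2]
  ring

lemma tendsto_affine_div_affine_atTop (a b c d : ℝ) (hd : d ≠ 0) :
    Tendsto (fun x => (a + x * c) / (b + x * d)) atTop (nhds (c / d)) := by
  have hinv := tendsto_inv_atTop_zero (𝕜 := ℝ)
  have h := ((hinv.const_mul a).add_const c).div ((hinv.const_mul b).add_const d)
    (by simpa using hd)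
  simp only [mul_zero, zero_add] at h
  refine h.congr' ?_
  filter_upwards [eventually_ne_atTop 0] with x hx
  simp only [Pi.div_apply]
  field_simp

lemma tendsto_freezing_factor (a b c d e k : ℝ) (hd : d ≠ 0) :
    Tendsto (fun β => (a + β * c / 2) / ((β * d / 2 + k) * (b + β * e / 2))) atTop
      (nhds (c / d * if e = 0 then b⁻¹ else 0)) := by
  have hratio := tendsto_affine_div_affine_atTop a k (c / 2) (d / 2) (div_ne_zero hd two_ne_zero)
  have hinv : Tendsto (fun β : ℝ => (b + β * (e / 2))⁻¹) atTop
      (nhds (if e = 0 then b⁻¹ else 0)) := by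
    split_ifs with he
    · simp [he]
    · simpa using tendsto_affine_div_affine_atTop 1 b 0 (e / 2) (div_ne_zero he two_ne_zero)
  convert hratio.mul hinv using 1
  · ext β
    rw [div_mul_eq_div_div, div_eq_mul_inv]
    congr 2 <;> ring
  · rw [div_div_div_cancel_right₀ two_ne_zero]

lemma card_filter_one_le_eq_of_pos {m : ℕ} {τ : ℕ → ℕ} (hpos : ∀ i ∈ Icc 1 m, 0 < τ i) :
    #({i ∈ Icc 1 m | 1 ≤ τ i}) = m := by
  rw [filter_true_of_mem (p := fun i => 1 ≤ τ i) hpos, Nat.card_Icc, Nat.add_sub_cancel]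

theorem jack_product_freezing_limit_general (N m : ℕ) (hmN : m ≤ N) (τ : ℕ → ℕ)
    (hpos : ∀ i ∈ Finset.Icc 1 m, 0 < τ i) :
    let τ' : ℕ → ℕ := fun j => ((Finset.Icc 1 m).filter fun i => j ≤ τ i).card
    let n : ℕ := ∑ i ∈ Finset.Icc 1 m, τ i
    let P : ℝ → ℝ := fun β =>
      ∏ i ∈ Finset.Icc 1 m, ∏ j ∈ Finset.Icc 1 (τ i),
        (((τ i : ℝ) - (j : ℝ)) + β * ((τ' j : ℝ) - (i : ℝ) + 1) / 2)
          / ((β * ((N : ℝ) - (i : ℝ) + 1) / 2 + (j : ℝ) - 1)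
              * (((τ i : ℝ) - (j : ℝ) + 1) + β * ((τ' j : ℝ) - (i : ℝ)) / 2))
    (m = 1 → Tendsto P atTop (nhds (1 / ((N : ℝ) ^ n * (Nat.factorial n : ℝ))))) ∧
    (2 ≤ m → Tendsto P atTop (nhds 0)) := by
  intro τ' n P
  have hP : Tendsto P atTop (nhds (∏ i ∈ Icc 1 m, ∏ j ∈ Icc 1 (τ i),
      ((τ' j : ℝ) - i + 1) / ((N : ℝ) - i + 1) *
        if (τ' j : ℝ) - i = 0 then ((τ i : ℝ) - j + 1)⁻¹ else 0)) := by
    refine tendsto_finsetProd _ fun i hi => tendsto_finsetProd _ fun j _ => ?_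
    have hiN : (i : ℝ) ≤ N := by exact_mod_cast (mem_Icc.1 hi).2.trans hmN
    refine (tendsto_freezing_factor ((τ i : ℝ) - j) ((τ i : ℝ) - j + 1) ((τ' j : ℝ) - i + 1)
      ((N : ℝ) - i + 1) ((τ' j : ℝ) - i) ((j : ℝ) - 1) (by linarith)).congr fun β => ?_
    ring
  constructor
  · rintro rfl
    have hcell : ∀ j ∈ Icc 1 (τ 1), ((τ' j : ℝ) - 1 + 1) / ((N : ℝ) - 1 + 1) *
        (if (τ' j : ℝ) - 1 = 0 then ((τ 1 : ℝ) - j + 1)⁻¹ else 0) =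
        (N : ℝ)⁻¹ * ((τ 1 : ℝ) - j + 1)⁻¹ := fun j hj => by
      rw [show τ' j = 1 by simp [τ', filter_singleton, (mem_Icc.1 hj).2]]
      simp
    convert hP using 2
    rw [Icc_self, prod_singleton, Nat.cast_one, prod_congr rfl hcell, prod_mul_distrib, prod_const,
      prod_inv_distrib, prod_Icc_sub_add_one_eq_factorial, Nat.card_Icc]
    simp [n, mul_comm]
  · intro hm2
    have hcorner : (τ' 1 : ℝ) - 1 ≠ 0 := by
      rw [sub_ne_zero, Nat.cast_ne_one, show τ' 1 = m from card_filter_one_le_eq_of_pos hpos]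
      omega
    convert hP using 2
    have hm1 : 1 ∈ Icc 1 m := mem_Icc.2 ⟨le_rfl, by omega⟩
    refine (prod_eq_zero hm1 (prod_eq_zero (mem_Icc.2 ⟨le_rfl, hpos 1 hm1⟩) ?_)).symm
    simp [hcorner]

/-- the freezing limit `β → ∞` of the product
`P(β) = ∏_{(i,j)∈τ} (τ_i − j + β(τ'_j − i + 1)/2) /
        [(β(N−i+1)/2 + j − 1)(τ_i − j + 1 + β(τ'_j − i)/2)]`
is `1/(N^n n!)` when the partition `τ` has a single part, and `0` when it has at least two
parts. Here the parts are `τ 1 ≥ … ≥ τ m > 0`, `n = |τ|`, and `τ'` is the conjugate. -/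
theorem jack_product_freezing_limit (N m : ℕ) (hm : 1 ≤ m) (hmN : m ≤ N) (τ : ℕ → ℕ)
    (hpos : ∀ i ∈ Finset.Icc 1 m, 0 < τ i)
    (hdec : ∀ i j : ℕ, 1 ≤ i → i ≤ j → j ≤ m → τ j ≤ τ i) :
    let τ' : ℕ → ℕ := fun j => ((Finset.Icc 1 m).filter fun i => j ≤ τ i).card
    let n : ℕ := ∑ i ∈ Finset.Icc 1 m, τ i
    let P : ℝ → ℝ := fun β =>
      ∏ i ∈ Finset.Icc 1 m, ∏ j ∈ Finset.Icc 1 (τ i),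
        (((τ i : ℝ) - (j : ℝ)) + β * ((τ' j : ℝ) - (i : ℝ) + 1) / 2)
          / ((β * ((N : ℝ) - (i : ℝ) + 1) / 2 + (j : ℝ) - 1)
              * (((τ i : ℝ) - (j : ℝ) + 1) + β * ((τ' j : ℝ) - (i : ℝ)) / 2))
    (m = 1 → Tendsto P atTop (nhds (1 / ((N : ℝ) ^ n * (Nat.factorial n : ℝ))))) ∧
    (2 ≤ m → Tendsto P atTop (nhds 0)) :=
  jack_product_freezing_limit_general N m hmN τ hpos
end
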